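/- Consider a K-armed bandit on a probability space (Ω, F, P): for each arm i ∈ {1,…,K} and u ≥ 1 let X_{i,u} : Ω → ℝ be the reward of the u-th pull of arm i, where the family (X_{i,u})_{i,u} is mutually independent, for each fixed i the sequence (X_{i,u})_{u≥1} is identically distributed and integrable with mean μ i, and there is a unique arm i* with μ* := μ i* = max_i μ i. Let I : ℕ → Ω → {1,…,K} be a measurable selection process such that for P-almost every ω, the realized selection sequence t ↦ I t (ω) obeys the UCB1 rule with constant C = 2 applied to the realized reward sequences u ↦ X_{i,u}(ω). Then for every suboptimal arm i ≠ i*, the realized pull fraction satisfies T i n / n → 0 almost surely as n → ∞. -/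

import Mathlib

/-!
By the strong law of large numbers the sample means of every arm converge, so they are bounded.
The exploration bonus `√(C log t / T)` of an arm pulled only finitely often then grows without
bound, while every other arm with many pulls has a bonus at most half as large; so eventually only
arms with few pulls are selected, which is impossible. Hence every arm is pulled infinitely often
and its empirical mean converges to its mean. Once the empirical means of arms `i` and `j`, with
gap `Δ = μ j - μ i > 0`, are within `Δ / 4` of their limits, arm `i` can only be selected while its
bonus exceeds `Δ / 2`, i.e. while `T i t ≤ 4 C log (t + 1) / Δ²`; so `T i n = O(log n)`.
-/

open Finset Filter

/-- Number of pulls of arm `i` among rounds `1, …, t`. -/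
noncomputable def pullCount {K : ℕ} (I : ℕ → Fin K) (i : Fin K) (t : ℕ) : ℕ :=
  ((Finset.Icc 1 t).filter (fun s => I s = i)).card

/-- Empirical mean of arm `i` after round `t` (equal to `0` when the arm was never pulled). -/
noncomputable def empMean {K : ℕ} (x : Fin K → ℕ → ℝ) (I : ℕ → Fin K) (i : Fin K) (t : ℕ) : ℝ :=
  if pullCount I i t = 0 then 0
  else (1 / (pullCount I i t : ℝ)) * ∑ u ∈ Finset.Icc 1 (pullCount I i t), x i u

/-- The selection sequence `I` obeys the UCB1 rule with constant `C`. -/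
def UCB1Rule {K : ℕ} (x : Fin K → ℕ → ℝ) (I : ℕ → Fin K) (C : ℝ) : Prop :=
  ∀ t : ℕ, 1 ≤ t →
    if ∃ i : Fin K, pullCount I i (t - 1) = 0 then pullCount I (I t) (t - 1) = 0
    else ∀ j : Fin K,
      empMean x I j (t - 1) + Real.sqrt (C * Real.log t / (pullCount I j (t - 1) : ℝ))
        ≤ empMean x I (I t) (t - 1)
            + Real.sqrt (C * Real.log t / (pullCount I (I t) (t - 1) : ℝ))


open MeasureTheory ProbabilityTheory
open Topology

noncomputable def sampleMean (y : ℕ → ℝ) (m : ℕ) : ℝ :=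
  (∑ u ∈ Finset.Icc 1 m, y u) / m

/-- The index maximised by the UCB1 rule in round `t + 1`. -/
noncomputable def ucbIndex {K : ℕ} (x : Fin K → ℕ → ℝ) (I : ℕ → Fin K) (C : ℝ) (t : ℕ)
    (i : Fin K) : ℝ :=
  empMean x I i t + √(C * Real.log (t + 1 : ℕ) / pullCount I i t)

theorem Real.monotone_log_natCast : Monotone fun n : ℕ => Real.log n := by
  intro a b hab
  rcases Nat.eq_zero_or_pos a with rfl | ha
  · simpa using Real.log_natCast_nonneg b
  · exact Real.log_le_log (by exact_mod_cast ha) (by exact_mod_cast hab)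

theorem exists_forall_abs_le_of_tendsto {ι : Type*} [Finite ι] {f : ι → ℕ → ℝ} {a : ι → ℝ}
    (hf : ∀ i, Tendsto (f i) atTop (𝓝 (a i))) : ∃ M, ∀ i n, |f i n| ≤ M := by
  choose M hM using fun i => (hf i).abs.bddAbove_range
  obtain ⟨M', hM'⟩ := Finite.bddAbove_range M
  exact ⟨M', fun i n => (hM i ⟨n, rfl⟩).trans (hM' ⟨i, rfl⟩)⟩

theorem ae_tendsto_sampleMean {Ω : Type*} [MeasurableSpace Ω] {P : Measure Ω}
    {y : ℕ → Ω → ℝ} (hint : Integrable (y 1) P)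
    (hindep : Pairwise fun u v => IndepFun (y u) (y v) P)
    (hident : ∀ u, IdentDistrib (y u) (y 1) P P) :
    ∀ᵐ ω ∂P, Tendsto (sampleMean (y · ω)) atTop (𝓝 P[y 1]) := by
  have hslln := strong_law_ae_real (fun u => y (u + 1)) hint
    (fun u v huv => hindep (by simpa using huv)) (fun u => hident (u + 1))
  filter_upwards [hslln] with ω hω
  convert hω using 2 with m
  rw [sampleMean, ← Finset.Ico_add_one_right_eq_Icc, Finset.sum_Ico_eq_sum_range,
    Nat.add_sub_cancel]
  simp only [add_comm 1]

section PullCount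

variable {K : ℕ} (I : ℕ → Fin K)

theorem pullCount_succ (i : Fin K) (t : ℕ) :
    pullCount I i (t + 1) = pullCount I i t + if I (t + 1) = i then 1 else 0 := by
  unfold pullCount
  rw [← Finset.insert_Icc_right_eq_Icc_add_one (by omega), Finset.filter_insert]
  split_ifs
  · rw [Finset.card_insert_of_notMem (by simp)]
  · rfl

theorem pullCount_mono (i : Fin K) : Monotone (pullCount I i) := fun _ _ h =>
  Finset.card_le_card (Finset.filter_subset_filter _ (Finset.Icc_subset_Icc_right h))

theorem pullCount_le (i : Fin K) (t : ℕ) : pullCount I i t ≤ t := by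
  simpa [pullCount] using Finset.card_filter_le (Finset.Icc 1 t) (fun s => I s = i)

theorem sum_pullCount (t : ℕ) : ∑ i, pullCount I i t = t := by
  unfold pullCount
  rw [← Finset.card_eq_sum_card_fiberwise (fun s _ => Finset.mem_univ (I s)), Nat.card_Icc,
    Nat.add_sub_cancel]

theorem empMean_eq_sampleMean (x : Fin K → ℕ → ℝ) (i : Fin K) (t : ℕ) :
    empMean x I i t = sampleMean (x i) (pullCount I i t) := by
  unfold empMean sampleMean
  split_ifs with h
  · simp [h]
  · rw [one_div_mul_eq_div]

theorem pullCount_le_max_of_selected_le {i : Fin K} {t₀ : ℕ} {g : ℕ → ℝ} (hg : Monotone g)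
    (h : ∀ t ≥ t₀, I (t + 1) = i → (pullCount I i t : ℝ) ≤ g (t + 1)) {n : ℕ} (hn : t₀ ≤ n) :
    (pullCount I i n : ℝ) ≤ max (pullCount I i t₀ : ℝ) (g n + 1) := by
  induction n, hn using Nat.le_induction with
  | base => exact le_max_left _ _
  | succ n hn ih =>
    rw [pullCount_succ]
    split_ifs with hsel
    · push_cast
      exact le_max_of_le_right (by linarith [h n hn hsel])
    · simpa using ih.trans (max_le_max_left _ (by linarith [hg n.le_succ]))

theorem frequently_lt_pullCount_selected (B : ℝ) :
    ∃ᶠ t in atTop, B < pullCount I (I (t + 1)) t := by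
  by_contra hB
  obtain ⟨t₀, ht₀⟩ := eventually_atTop.1 (not_frequently.1 hB)
  have hB₀ : 0 ≤ B := (Nat.cast_nonneg _).trans (not_lt.1 (ht₀ t₀ le_rfl))
  have ht₀B : (0 : ℝ) ≤ t₀ + (B + 1) := by positivity
  have hbound (i : Fin K) {n : ℕ} (hn : t₀ ≤ n) : (pullCount I i n : ℝ) ≤ t₀ + (B + 1) := by
    refine (pullCount_le_max_of_selected_le I monotone_const
      (fun t ht hsel => hsel ▸ not_lt.1 (ht₀ t ht)) hn).trans (max_le ?_ (by linarith))
    have : (pullCount I i t₀ : ℝ) ≤ t₀ := by exact_mod_cast pullCount_le I i t₀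
    linarith
  obtain ⟨n, hn⟩ := exists_nat_gt (K * (t₀ + (B + 1)) + t₀)
  have hn₀ : (t₀ : ℝ) ≤ n := by nlinarith [(Nat.cast_nonneg K : (0 : ℝ) ≤ K)]
  have hsum : (n : ℝ) ≤ K * (t₀ + (B + 1)) := calc
    (n : ℝ) = ∑ i, (pullCount I i n : ℝ) := by exact_mod_cast (sum_pullCount I n).symm
    _ ≤ ∑ _i : Fin K, (t₀ + (B + 1) : ℝ) :=
      Finset.sum_le_sum fun i _ => hbound i (by exact_mod_cast hn₀)
    _ = K * (t₀ + (B + 1)) := by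
      rw [Finset.sum_const, Finset.card_univ, Fintype.card_fin, nsmul_eq_mul]
  linarith [(Nat.cast_nonneg t₀ : (0 : ℝ) ≤ t₀)]

end PullCount

namespace UCB1Rule

variable {K : ℕ} {x : Fin K → ℕ → ℝ} {I : ℕ → Fin K} {C : ℝ}

/-- While some arm is unpulled, the rule only pulls unpulled arms. -/
theorem pullCount_le_one (hU : UCB1Rule x I C) {t : ℕ} {j : Fin K} (hj : pullCount I j t = 0)
    (i : Fin K) : pullCount I i t ≤ 1 := by
  induction t with
  | zero => simp [pullCount]
  | succ t ih =>
    have hj' : pullCount I j t = 0 := Nat.eq_zero_of_le_zero (hj ▸ pullCount_mono I j t.le_succ)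
    have hsel : pullCount I (I (t + 1)) t = 0 := by
      simpa only [Nat.add_sub_cancel, if_pos (⟨j, hj'⟩ : ∃ k, pullCount I k t = 0)]
        using hU (t + 1) (by omega)
    rw [pullCount_succ]
    split_ifs with h
    · rw [← h, hsel]
    · exact ih hj'

theorem pullCount_pos (hU : UCB1Rule x I C) {t : ℕ} (ht : K ≤ t) (i : Fin K) :
    0 < pullCount I i t := by
  by_contra! h
  have h₀ : pullCount I i t = 0 := by omega
  have : t ≤ K - 1 := calc
    t = ∑ j, pullCount I j t := (sum_pullCount I t).symm
    _ = ∑ j ∈ Finset.univ.erase i, pullCount I j t := by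
      rw [← Finset.sum_erase_add _ _ (Finset.mem_univ i), h₀, add_zero]
    _ ≤ ∑ _j ∈ Finset.univ.erase i, 1 := Finset.sum_le_sum fun j _ => hU.pullCount_le_one h₀ j
    _ = K - 1 := by simp [Finset.card_erase_of_mem]
  have := i.pos
  omega

theorem ucbIndex_le_selected (hU : UCB1Rule x I C) {t : ℕ} (ht : K ≤ t) (j : Fin K) :
    ucbIndex x I C t j ≤ ucbIndex x I C t (I (t + 1)) := by
  have hall : ¬ ∃ i, pullCount I i t = 0 := fun ⟨i, hi⟩ => (hU.pullCount_pos ht i).ne' hi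
  have h := hU (t + 1) (by omega)
  simp only [Nat.add_sub_cancel, if_neg hall] at h
  exact h j

theorem tendsto_pullCount_atTop (hC : 0 < C) (hU : UCB1Rule x I C) {M : ℝ}
    (hM : ∀ k m, |sampleMean (x k) m| ≤ M) (j : Fin K) :
    Tendsto (pullCount I j) atTop atTop := by
  refine tendsto_atTop_atTop_of_monotone (pullCount_mono I j) fun b => ?_
  by_contra! hb
  have hb₀ : (0 : ℝ) < b := by exact_mod_cast (hU.pullCount_pos le_rfl j).trans (hb K)
  have hbonus : Tendsto (fun t : ℕ => √(C * Real.log (t + 1 : ℕ) / b)) atTop atTop :=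
    Real.tendsto_sqrt_atTop.comp (((Real.tendsto_log_atTop.comp (tendsto_natCast_atTop_atTop.comp
      (tendsto_add_atTop_nat 1))).const_mul_atTop hC).atTop_div_const hb₀)
  have hemp (k : Fin K) (t : ℕ) : |empMean x I k t| ≤ M := by
    simpa only [empMean_eq_sampleMean] using hM k (pullCount I k t)
  -- An arm with `4 b` pulls has at most half the bonus of arm `j`, so it loses to `j` once that
  -- bonus is large.
  have hsel : ∀ᶠ t in atTop, (pullCount I (I (t + 1)) t : ℝ) < 4 * b := by
    filter_upwards [hbonus.eventually_gt_atTop (4 * M), eventually_ge_atTop K] with t hbig ht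
    by_contra! hk
    set a := C * Real.log (t + 1 : ℕ)
    have ha : 0 ≤ a := mul_nonneg hC.le (Real.log_natCast_nonneg _)
    have hj : -M + √(a / b) ≤ ucbIndex x I C t j := by
      have hpos : (0 : ℝ) < pullCount I j t := by exact_mod_cast hU.pullCount_pos ht j
      have hle : (pullCount I j t : ℝ) ≤ b := by exact_mod_cast (hb t).le
      exact add_le_add (neg_le_of_abs_le (hemp j t))
        (Real.sqrt_le_sqrt (div_le_div_of_nonneg_left ha hpos hle))
    have hsel : ucbIndex x I C t (I (t + 1)) ≤ M + √(a / b) / 2 := by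
      have hhalf : √(a / (4 * b)) = √(a / b) / 2 := by
        rw [show a / (4 * b) = a / b / 2 ^ 2 by ring, Real.sqrt_div' _ (by positivity),
          Real.sqrt_sq zero_le_two]
      exact add_le_add (le_of_abs_le (hemp _ t))
        (hhalf ▸ Real.sqrt_le_sqrt (div_le_div_of_nonneg_left ha (by positivity) hk))
    linarith [hU.ucbIndex_le_selected ht j]
  obtain ⟨t, hlt, hgt⟩ := ((frequently_lt_pullCount_selected I (4 * b)).and_eventually hsel).exists
  exact lt_asymm hlt hgt

theorem pullCount_le_of_selected (hU : UCB1Rule x I C) {i j : Fin K} {Δ : ℝ} (hΔ : 0 < Δ)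
    {t : ℕ} (ht : K ≤ t) (hgap : empMean x I i t + Δ / 2 < empMean x I j t)
    (hsel : I (t + 1) = i) :
    (pullCount I i t : ℝ) ≤ 4 * C * Real.log (t + 1 : ℕ) / Δ ^ 2 := by
  have hpos : (0 : ℝ) < pullCount I i t := by exact_mod_cast hU.pullCount_pos ht i
  have hbonus : Δ / 2 < √(C * Real.log (t + 1 : ℕ) / pullCount I i t) := by
    have := hU.ucbIndex_le_selected ht j
    rw [hsel] at this
    unfold ucbIndex at this
    linarith [Real.sqrt_nonneg (C * Real.log (t + 1 : ℕ) / pullCount I j t)]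
  rw [Real.lt_sqrt (by positivity), lt_div_iff₀ hpos] at hbonus
  rw [le_div_iff₀ (by positivity)]
  nlinarith

theorem tendsto_pullCount_div_nhds_zero (hC : 0 < C) (hU : UCB1Rule x I C) {μ : Fin K → ℝ}
    (hx : ∀ k, Tendsto (sampleMean (x k)) atTop (𝓝 (μ k))) {i j : Fin K} (hij : μ i < μ j) :
    Tendsto (fun n : ℕ => (pullCount I i n : ℝ) / n) atTop (𝓝 0) := by
  obtain ⟨M, hM⟩ := exists_forall_abs_le_of_tendsto hx
  have hemp (k : Fin K) : Tendsto (fun t => empMean x I k t) atTop (𝓝 (μ k)) := by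
    simp only [empMean_eq_sampleMean]
    exact (hx k).comp (hU.tendsto_pullCount_atTop hC hM k)
  set Δ := μ j - μ i
  have hΔ : 0 < Δ := sub_pos.2 hij
  have hgap : ∀ᶠ t in atTop, empMean x I i t + Δ / 2 < empMean x I j t := by
    have := (hemp j).sub ((hemp i).add_const (Δ / 2))
    filter_upwards [this.eventually_const_lt (by linarith : (0 : ℝ) < μ j - (μ i + Δ / 2))]
      with t ht
    linarith
  obtain ⟨t₀, ht₀⟩ := eventually_atTop.1 (hgap.and (eventually_ge_atTop K))
  set g : ℕ → ℝ := fun n => 4 * C * Real.log n / Δ ^ 2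
  have hg : Monotone g := fun a b hab =>
    div_le_div_of_nonneg_right
      (mul_le_mul_of_nonneg_left (Real.monotone_log_natCast hab) (by positivity)) (sq_nonneg Δ)
  have hbound (n : ℕ) (hn : t₀ ≤ n) :
      (pullCount I i n : ℝ) ≤ max (pullCount I i t₀ : ℝ) (g n + 1) :=
    pullCount_le_max_of_selected_le I hg
      (fun t ht hsel => hU.pullCount_le_of_selected hΔ (ht₀ t ht).2 (ht₀ t ht).1 hsel) hn
  have hlog : Tendsto (fun n : ℕ => Real.log n / n) atTop (𝓝 0) :=
    Real.isLittleO_log_id_atTop.tendsto_div_nhds_zero.comp tendsto_natCast_atTop_atTop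
  have hmax : Tendsto (fun n : ℕ => max (pullCount I i t₀ : ℝ) (g n + 1) / n) atTop (𝓝 0) := by
    have hg' : Tendsto (fun n : ℕ => (g n + 1) / n) atTop (𝓝 0) := by
      have := (hlog.const_mul (4 * C / Δ ^ 2)).add (tendsto_const_div_atTop_nhds_zero_nat 1)
      rw [mul_zero, add_zero] at this
      refine this.congr fun n => ?_
      simp only [g]
      ring
    simpa only [max_div_div_right (Nat.cast_nonneg _), max_self] using
      (tendsto_const_div_atTop_nhds_zero_nat _).max hg'
  exact squeeze_zero' (.of_forall fun n => by positivity)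
    (eventually_atTop.2 ⟨t₀, fun n hn => div_le_div_of_nonneg_right (hbound n hn) n.cast_nonneg⟩)
    hmax

end UCB1Rule

theorem ucb1_bandit_suboptimal_pull_fraction_tendsto_zero_ae_general
    {Ω : Type*} [MeasurableSpace Ω] (P : Measure Ω)
    {K : ℕ}
    (X : Fin K → ℕ → Ω → ℝ)
    (hindep : iIndepFun
      (fun p : Fin K × ℕ => X p.1 p.2) P)
    (hident : ∀ (i : Fin K) (u : ℕ), IdentDistrib (X i u) (X i 1) P P)
    (hint : ∀ i : Fin K, Integrable (X i 1) P)
    (μ : Fin K → ℝ) (hmean : ∀ i : Fin K, P[X i 1] = μ i)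
    (istar : Fin K) (huniq : ∀ i : Fin K, i ≠ istar → μ i < μ istar)
    (I : ℕ → Ω → Fin K)
    (hUCB : ∀ᵐ ω ∂P, UCB1Rule (fun i u => X i u ω) (fun t => I t ω) 2) :
    ∀ i : Fin K, i ≠ istar →
      ∀ᵐ ω ∂P, Tendsto
        (fun n : ℕ => (pullCount (fun t => I t ω) i n : ℝ) / (n : ℝ)) atTop (nhds 0) := by
  intro i hi
  have hslln : ∀ᵐ ω ∂P, ∀ k, Tendsto (sampleMean (X k · ω)) atTop (𝓝 (μ k)) := by
    refine ae_all_iff.2 fun k => hmean k ▸ ae_tendsto_sampleMean (hint k) ?_ (hident k)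
    exact fun u v huv => hindep.indepFun (i := (k, u)) (j := (k, v)) (by simpa using huv)
  filter_upwards [hslln, hUCB] with ω hω hUω
  exact hUω.tendsto_pullCount_div_nhds_zero two_pos hω (huniq i hi)

theorem ucb1_bandit_suboptimal_pull_fraction_tendsto_zero_ae
    {Ω : Type*} [MeasurableSpace Ω] (P : Measure Ω) [IsProbabilityMeasure P]
    {K : ℕ} (hK : 2 ≤ K)
    (X : Fin K → ℕ → Ω → ℝ)
    (hmeas : ∀ (i : Fin K) (u : ℕ), Measurable (X i u))
    (hindep : iIndepFun
      (fun p : Fin K × ℕ => X p.1 p.2) P)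
    (hident : ∀ (i : Fin K) (u : ℕ), IdentDistrib (X i u) (X i 1) P P)
    (hint : ∀ i : Fin K, Integrable (X i 1) P)
    (μ : Fin K → ℝ) (hmean : ∀ i : Fin K, P[X i 1] = μ i)
    (istar : Fin K) (huniq : ∀ i : Fin K, i ≠ istar → μ i < μ istar)
    (I : ℕ → Ω → Fin K) (hImeas : ∀ t : ℕ, Measurable (I t))
    (hUCB : ∀ᵐ ω ∂P, UCB1Rule (fun i u => X i u ω) (fun t => I t ω) 2) :
    ∀ i : Fin K, i ≠ istar →
      ∀ᵐ ω ∂P, Tendsto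
        (fun n : ℕ => (pullCount (fun t => I t ω) i n : ℝ) / (n : ℝ)) atTop (nhds 0) :=
  ucb1_bandit_suboptimal_pull_fraction_tendsto_zero_ae_general P X hindep hident hint μ hmean istar
    huniq I hUCB
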